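/- Let α ≥ 2 be an integer and let C be a minimal d_α-D_α cut in A_α with C ≠ {d_α}. Then for every nonempty S ⊆ {1,…,α−1}: if d_S ∉ C, then d_T ∉ C for every nonempty proper subset T ⊂ S. -/

import Mathlib

/-- Raw vertex names for the auxiliary graph `A_α`: the special vertex `top = d_α`,
vertices `d S`, and vertices `x S`. -/
inductive AV : Type where
  | top : AV
  | d : Finset ℕ → AV
  | x : Finset ℕ → AV
deriving DecidableEq

/-- The vertices actually present in `A_α`: `d_α`; `d S` for nonempty
`S ⊆ {1, …, α-1}`; and `x S` for `S ⊆ {1, …, α}` with `|S| ≥ 2`. -/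
def AValid (α : ℕ) : AV → Prop
  | AV.top => True
  | AV.d S => S.Nonempty ∧ S ⊆ Finset.Icc 1 (α - 1)
  | AV.x S => 2 ≤ S.card ∧ S ⊆ Finset.Icc 1 α

/-- One-sided adjacency for `A_α`: `d_α x_S` when `α ∈ S`; `d_S x_T` when
`S ∩ T ≠ ∅`; `x_S x_T` when `S ≠ T` and `S ∩ T ≠ ∅`. -/
def AAdj (α : ℕ) : AV → AV → Prop
  | AV.top, AV.x S => α ∈ S
  | AV.d S, AV.x T => (S ∩ T).Nonempty
  | AV.x S, AV.x T => S ≠ T ∧ (S ∩ T).Nonempty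
  | _, _ => False

/-- The auxiliary graph `A_α`, on the valid vertices. -/
def Agraph (α : ℕ) : SimpleGraph {v : AV // AValid α v} where
  Adj a b := AAdj α a.1 b.1 ∨ AAdj α b.1 a.1
  symm := ⟨fun _ _ h => Or.symm h⟩
  loopless := ⟨by
    rintro ⟨v, hv⟩ h
    rcases v with _ | S | S <;> simp only [AAdj] at h <;> tauto⟩

/-- The vertex `d_α` of `A_α`. -/
def dTop (α : ℕ) : {v : AV // AValid α v} := ⟨AV.top, trivial⟩

/-- The set `D_α = {d_S : S ⊆ {1, …, α-1}, S ≠ ∅}` of vertices of `A_α`. -/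
def Dset (α : ℕ) : Set {v : AV // AValid α v} := {v | ∃ S, v.1 = AV.d S}

/-- `C` is an `A`-`B` cut in `G`: the graph `G - C` (i.e. the subgraph of `G`
induced on `Cᶜ`) contains no path from `A \ C` to `B \ C`. -/
def IsCut {V : Type*} (G : SimpleGraph V) (A B C : Set V) : Prop :=
  ∀ (a b : ↥(Cᶜ : Set V)), (a : V) ∈ A → (b : V) ∈ B →
    ¬ (G.induce (Cᶜ : Set V)).Reachable a b

/-- `C` is a minimal `A`-`B` cut in `G`. -/
def IsMinimalCut {V : Type*} (G : SimpleGraph V) (A B C : Set V) : Prop :=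
  IsCut G A B C ∧ ∀ x ∈ C, ¬ IsCut G A B (C \ {x})

/-- Validity of the vertex `x_{S ∪ {α}}` for nonempty `S ⊆ {1, …, α-1}`. -/
lemma aValid_x_union (α : ℕ) (hα : 2 ≤ α) (S : Finset ℕ)
    (hS : S ⊆ Finset.Icc 1 (α - 1)) (hne : S.Nonempty) :
    AValid α (AV.x (S ∪ {α})) := by
  have hαS : α ∉ S := by
    intro h
    have := (Finset.mem_Icc.1 (hS h)).2
    omega
  constructor
  · have hcard : (S ∪ {α}).card = S.card + 1 := by
      rw [Finset.union_comm, ← Finset.insert_eq, Finset.card_insert_of_notMem hαS]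
    have : 1 ≤ S.card := Finset.one_le_card.2 hne
    omega
  · refine Finset.union_subset (hS.trans (Finset.Icc_subset_Icc le_rfl (Nat.sub_le α 1))) ?_
    simp only [Finset.singleton_subset_iff, Finset.mem_Icc]
    omega

/-- Validity of the vertex `x_R` for `R ⊆ {1, …, α-1}` with `|R| ≥ 2`. -/
lemma aValid_x_low (α : ℕ) (R : Finset ℕ) (hR : R ⊆ Finset.Icc 1 (α - 1))
    (hcard : 2 ≤ R.card) : AValid α (AV.x R) :=
  ⟨hcard, hR.trans (Finset.Icc_subset_Icc le_rfl (Nat.sub_le α 1))⟩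

/-!
If `N(t) ⊆ N(s)` for some `s ∈ B` outside a cut `C`, then sending `t` to `s` maps every walk
avoiding `C \ {t}` to a walk avoiding `C` with the same ends up to replacing `t` by `s`.
So `t` may be removed from any `A`-`B` cut (as long as `t ∉ A`), and a minimal cut never
contains it. In `A_α`, `N(d_T) ⊆ N(d_S)` whenever `T ⊆ S`.
-/

section Redirect

variable {V : Type*} (G : SimpleGraph V) {C : Set V} {t s : V}

open Classical in
/-- Adjacency is preserved because `t` and `s` are never adjacent: `s ∈ N(t)` would give
`s ∈ N(s)`. -/
noncomputable def redirectHom (hs : s ∉ C) (hN : G.neighborSet t ⊆ G.neighborSet s) :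
    G.induce (C \ {t})ᶜ →g G.induce Cᶜ where
  toFun v := if h : v.1 = t then ⟨s, hs⟩ else ⟨v.1, fun hv => v.2 ⟨hv, h⟩⟩
  map_rel' {u v} huv := by
    rw [SimpleGraph.induce_adj] at huv
    by_cases hu : u.1 = t <;> by_cases hv : v.1 = t <;>
      simp only [hu, hv, dite_true, dite_false, SimpleGraph.induce_adj]
    · rw [hu, hv] at huv
      exact absurd huv (G.loopless.irrefl t)
    · rw [hu] at huv
      exact hN huv
    · rw [hv] at huv
      exact (hN huv.symm).symm
    · exact huv

open Classical in
lemma coe_redirectHom_apply (hs : s ∉ C) (hN : G.neighborSet t ⊆ G.neighborSet s)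
    (v : ↥(C \ {t})ᶜ) : (redirectHom G hs hN v).1 = if v.1 = t then s else v.1 := by
  simp only [redirectHom, RelHom.coeFn_mk]
  split_ifs <;> rfl

theorem IsCut.diff_singleton_of_neighborSet_subset {A B : Set V} (hC : IsCut G A B C)
    (htA : t ∉ A) (hsB : s ∈ B) (hs : s ∉ C) (hN : G.neighborSet t ⊆ G.neighborSet s) :
    IsCut G A B (C \ {t}) := by
  intro a b haA hbB hab
  have hat : a.1 ≠ t := fun h => htA (h ▸ haA)
  have hfa : (redirectHom G hs hN a).1 ∈ A := by
    rwa [coe_redirectHom_apply, if_neg hat]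
  have hfb : (redirectHom G hs hN b).1 ∈ B := by
    rw [coe_redirectHom_apply]
    split_ifs <;> assumption
  exact hC _ _ hfa hfb (hab.map _)

theorem IsMinimalCut.notMem_of_neighborSet_subset {A B : Set V} (hC : IsMinimalCut G A B C)
    (htA : t ∉ A) (hsB : s ∈ B) (hs : s ∉ C) (hN : G.neighborSet t ⊆ G.neighborSet s) :
    t ∉ C := fun htC =>
  hC.2 t htC (hC.1.diff_singleton_of_neighborSet_subset G htA hsB hs hN)

end Redirect

theorem Agraph_neighborSet_d_subset {α : ℕ} {S T : Finset ℕ} (hTS : T ⊆ S)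
    (hT : AValid α (AV.d T)) (hS : AValid α (AV.d S)) :
    (Agraph α).neighborSet ⟨AV.d T, hT⟩ ⊆ (Agraph α).neighborSet ⟨AV.d S, hS⟩ := by
  rintro ⟨_ | _ | U, _⟩ (h | h) <;>
    first | exact h.elim | exact Or.inl (h.mono (Finset.inter_subset_inter hTS le_rfl))

theorem cut_d_mono_general (α : ℕ) (C : Set {v : AV // AValid α v})
    (hC : IsMinimalCut (Agraph α) {dTop α} (Dset α) C)
    (S : Finset ℕ) (hSne : S.Nonempty) (hS : S ⊆ Finset.Icc 1 (α - 1))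
    (hdS : (⟨AV.d S, hSne, hS⟩ : {v : AV // AValid α v}) ∉ C)
    (T : Finset ℕ) (hTne : T.Nonempty) (hTS : T ⊂ S) :
    (⟨AV.d T, hTne, hTS.subset.trans hS⟩ : {v : AV // AValid α v}) ∉ C :=
  hC.notMem_of_neighborSet_subset _ (fun h => AV.noConfusion (congrArg Subtype.val h))
    ⟨S, rfl⟩ hdS (Agraph_neighborSet_d_subset hTS.subset _ _)

/-- Let `C` be a minimal `d_α`-`D_α` cut in `A_α` with `C ≠ {d_α}`.  If `d_S ∉ C`
for a nonempty `S ⊆ {1, …, α-1}`, then `d_T ∉ C` for every nonempty proper subset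
`T ⊂ S`. -/
theorem cut_d_mono (α : ℕ) (hα : 2 ≤ α) (C : Set {v : AV // AValid α v})
    (hC : IsMinimalCut (Agraph α) {dTop α} (Dset α) C) (hCne : C ≠ {dTop α})
    (S : Finset ℕ) (hSne : S.Nonempty) (hS : S ⊆ Finset.Icc 1 (α - 1))
    (hdS : (⟨AV.d S, hSne, hS⟩ : {v : AV // AValid α v}) ∉ C)
    (T : Finset ℕ) (hTne : T.Nonempty) (hTS : T ⊂ S) :
    (⟨AV.d T, hTne, hTS.subset.trans hS⟩ : {v : AV // AValid α v}) ∉ C :=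
  cut_d_mono_general α C hC S hSne hS hdS T hTne hTS
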